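/- arXiv:2103.08532 — 2 statements merged into one kernel-verified Lean document; each statement's English description precedes it below -/
import Mathlib

section
/- The Uhlmann fidelity is multiplicative under tensor products: for positive semidefinite operators A, A' on H and B, B' on K, F(A ⊗ B, A' ⊗ B') = F(A,A') · F(B,B'), where F(X,Y) = tr √(√X Y √X). -/
open Matrix Kronecker ComplexOrder Filter

open Classical in
/-- Square root of a positive semidefinite matrix (junk value `0` otherwise). -/
noncomputable def matSqrt {n : Type*} [Fintype n] [DecidableEq n]
    (A : Matrix n n ℂ) : Matrix n n ℂ :=
  if h : A.PosSemidef then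
    h.1.eigenvectorUnitary.1 * diagonal ((↑) ∘ (√·) ∘ h.1.eigenvalues) *
      (star h.1.eigenvectorUnitary : Matrix n n ℂ)
  else 0

/-- Uhlmann fidelity F(A,B) = tr sqrt( sqrt A * B * sqrt A ). -/
noncomputable def fid {n : Type*} [Fintype n] [DecidableEq n]
    (A B : Matrix n n ℂ) : ℝ :=
  ((matSqrt (matSqrt A * B * matSqrt A)).trace).re

/-!
The positive square root commutes with Kronecker products: `√A ⊗ √B` is positive semidefinite
and squares to `A ⊗ B`. Applied once to `A ⊗ B` and once to the positive semidefinite matrices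
`√A A' √A` and `√B B' √B`, this turns the fidelity of the product into the trace of a Kronecker
product, i.e. a product of two traces, both real since they are traces of positive semidefinite
matrices.
-/

open scoped MatrixOrder

section

variable {m n : Type*} [Fintype m] [DecidableEq m] [Fintype n] [DecidableEq n]

theorem matSqrt_eq_cfcSqrt {A : Matrix n n ℂ} (hA : A.PosSemidef) : matSqrt A = CFC.sqrt A := by
  rw [matSqrt, dif_pos hA, CFC.sqrt_eq_real_sqrt A hA.nonneg, cfcₙ_eq_cfc, hA.1.cfc_eq,
    IsHermitian.cfc, Unitary.conjStarAlgAut_apply]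
  rfl

theorem posSemidef_matSqrt (A : Matrix n n ℂ) : (matSqrt A).PosSemidef := by
  by_cases hA : A.PosSemidef
  · rw [matSqrt_eq_cfcSqrt hA]
    exact (CFC.sqrt_nonneg A).posSemidef
  · rw [matSqrt, dif_neg hA]
    exact .zero

theorem matSqrt_kronecker {A : Matrix m m ℂ} {B : Matrix n n ℂ}
    (hA : A.PosSemidef) (hB : B.PosSemidef) :
    matSqrt (A ⊗ₖ B) = matSqrt A ⊗ₖ matSqrt B := by
  rw [matSqrt_eq_cfcSqrt (hA.kronecker hB), matSqrt_eq_cfcSqrt hA, matSqrt_eq_cfcSqrt hB]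
  refine CFC.sqrt_unique ?_ ((CFC.sqrt_nonneg A).posSemidef.kronecker
    (CFC.sqrt_nonneg B).posSemidef).nonneg
  rw [← mul_kronecker_mul, CFC.sqrt_mul_sqrt_self A hA.nonneg, CFC.sqrt_mul_sqrt_self B hB.nonneg]

theorem posSemidef_matSqrt_mul_mul_matSqrt (A : Matrix n n ℂ) {B : Matrix n n ℂ}
    (hB : B.PosSemidef) : (matSqrt A * B * matSqrt A).PosSemidef := by
  simpa only [(posSemidef_matSqrt A).1.eq] using hB.mul_mul_conjTranspose_same (matSqrt A)

theorem ofReal_fid (A B : Matrix n n ℂ) :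
    (fid A B : ℂ) = (matSqrt (matSqrt A * B * matSqrt A)).trace :=
  (Complex.eq_re_of_ofReal_le (Complex.ofReal_zero ▸ (posSemidef_matSqrt _).trace_nonneg)).symm

theorem matSqrt_kronecker_mul_kronecker_mul_matSqrt_kronecker {A A' : Matrix m m ℂ}
    {B B' : Matrix n n ℂ} (hA : A.PosSemidef) (hB : B.PosSemidef) :
    matSqrt (A ⊗ₖ B) * (A' ⊗ₖ B') * matSqrt (A ⊗ₖ B) =
      (matSqrt A * A' * matSqrt A) ⊗ₖ (matSqrt B * B' * matSqrt B) := by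
  rw [matSqrt_kronecker hA hB, mul_kronecker_mul, mul_kronecker_mul]

end

/-- Fidelity is multiplicative under tensor (Kronecker) products. -/
theorem fid_kronecker_mul {m n : Type*} [Fintype m] [DecidableEq m]
    [Fintype n] [DecidableEq n]
    (A A' : Matrix m m ℂ) (B B' : Matrix n n ℂ)
    (hA : A.PosSemidef) (hA' : A'.PosSemidef)
    (hB : B.PosSemidef) (hB' : B'.PosSemidef) :
    fid (A ⊗ₖ B) (A' ⊗ₖ B') = fid A A' * fid B B' := by
  apply Complex.ofReal_injective
  rw [Complex.ofReal_mul, ofReal_fid, ofReal_fid, ofReal_fid,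
    matSqrt_kronecker_mul_kronecker_mul_matSqrt_kronecker hA hB,
    matSqrt_kronecker (posSemidef_matSqrt_mul_mul_matSqrt A hA')
      (posSemidef_matSqrt_mul_mul_matSqrt B hB'), trace_kronecker]
end

section
/- Decomposition of the Helstrom (SLD quantum Fisher) information of an unnormalized state: let Γ(θ) = N(θ)τ(θ) where N(θ) > 0 is smooth and τ(θ) is a smooth family of positive definite density operators; let S be the Hermitian solution of ∂Γ/∂θ = (SΓ + ΓS)/2 and L the Hermitian solution of ∂τ/∂θ = (Lτ + τL)/2. Then tr(S²Γ) = (N'(θ))²/N(θ) + N(θ) tr(L²τ). -/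
open Matrix ComplexOrder

/-!
Tracing the defining equation of a symmetric logarithmic derivative against a matrix `X` gives
`tr(X ∂ρ) = tr(((XA + AX)/2) ρ)`, which is symmetric in `X` and `A`. Since `Γ = Nτ`, the matrix `L`
is also an SLD of `Γ` for the partial derivative `N ∂τ`, so this symmetry turns `tr(S N ∂τ)` into
`tr(L ∂Γ) = N' tr(Lτ) + N tr(L ∂τ) = N tr(L²τ)`, using `tr(Lτ) = tr ∂τ = 0` (the trace of `τ` is
constant). Together with `N tr(Sτ) = tr ∂Γ = N'` this splits `tr(S²Γ) = tr(S ∂Γ)` as claimed.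
-/

namespace Matrix

variable {n : Type*} [Fintype n]

section Trace

variable {R : Type*} [CommSemiring R]

theorem trace_anticommutator_mul (A ρ : Matrix n n R) :
    (A * ρ + ρ * A).trace = 2 * (A * ρ).trace := by
  rw [trace_add, trace_mul_comm ρ A, two_mul]

theorem trace_mul_anticommutator_comm (A B ρ : Matrix n n R) :
    (A * (B * ρ + ρ * B)).trace = (B * (A * ρ + ρ * A)).trace := by
  simp only [Matrix.mul_add, trace_add, ← Matrix.mul_assoc]
  rw [trace_mul_comm (A * ρ) B, trace_mul_comm (B * ρ) A, ← Matrix.mul_assoc,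
    ← Matrix.mul_assoc, add_comm]

theorem trace_mul_anticommutator_self (A ρ : Matrix n n R) :
    (A * (A * ρ + ρ * A)).trace = 2 * (A * A * ρ).trace := by
  rw [Matrix.mul_add, trace_add, ← Matrix.mul_assoc, ← Matrix.mul_assoc,
    trace_mul_comm (A * ρ) A, ← Matrix.mul_assoc, two_mul]

end Trace

section SLD

variable {𝕜 : Type*} [Field 𝕜]

/-- `A` is a symmetric logarithmic derivative of `ρ` for the derivative `dρ`. -/
def IsSLD (ρ dρ A : Matrix n n 𝕜) : Prop :=
  dρ = (2 : 𝕜)⁻¹ • (A * ρ + ρ * A)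

variable {ρ dρ dρ' A B : Matrix n n 𝕜}

theorem IsSLD.smul (h : IsSLD ρ dρ A) (c : 𝕜) : IsSLD (c • ρ) (c • dρ) A := by
  rw [IsSLD, h, Matrix.mul_smul, Matrix.smul_mul, ← smul_add, smul_comm]

theorem IsSLD.trace_mul_comm (hA : IsSLD ρ dρ A) (hB : IsSLD ρ dρ' B) :
    (A * dρ').trace = (B * dρ).trace := by
  rw [hA, hB, Matrix.mul_smul, Matrix.mul_smul, trace_smul, trace_smul,
    trace_mul_anticommutator_comm]

variable [NeZero (2 : 𝕜)]

theorem IsSLD.trace_eq (h : IsSLD ρ dρ A) : dρ.trace = (A * ρ).trace := by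
  rw [h, trace_smul, trace_anticommutator_mul, smul_eq_mul, inv_mul_cancel_left₀ two_ne_zero]

theorem IsSLD.trace_mul_self (h : IsSLD ρ dρ A) : (A * dρ).trace = (A * A * ρ).trace := by
  rw [h, Matrix.mul_smul, trace_smul, trace_mul_anticommutator_self, smul_eq_mul,
    inv_mul_cancel_left₀ two_ne_zero]

end SLD

theorem hasDerivAt_trace {𝕜 : Type*} [NontriviallyNormedField 𝕜] {F : Type*}
    [NormedAddCommGroup F] [NormedSpace 𝕜 F] {τ : 𝕜 → Matrix n n F} {dτ : Matrix n n F} {θ : 𝕜}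
    (h : ∀ i j, HasDerivAt (fun t => τ t i j) (dτ i j) θ) :
    HasDerivAt (fun t => (τ t).trace) dτ.trace θ := by
  simp only [trace, diag]
  exact HasDerivAt.fun_sum fun i _ => h i i

end Matrix

theorem helstrom_decomp_general {n : Type*} [Fintype n]
    (τ : ℝ → Matrix n n ℂ) (N : ℝ → ℝ) (θ : ℝ)
    (hτtr : ∀ t, (τ t).trace = 1) (hNpos : ∀ t, 0 < N t)
    (dτ : Matrix n n ℂ) (dN : ℝ)
    (hdτ : ∀ i j, HasDerivAt (fun t => τ t i j) (dτ i j) θ)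
    (S L : Matrix n n ℂ)
    (hSeq : (dN : ℂ) • τ θ + (N θ : ℂ) • dτ
      = (2 : ℂ)⁻¹ • (S * ((N θ : ℂ) • τ θ) + ((N θ : ℂ) • τ θ) * S))
    (hLeq : dτ = (2 : ℂ)⁻¹ • (L * τ θ + τ θ * L)) :
    (S * S * ((N θ : ℂ) • τ θ)).trace
      = ((dN ^ 2 / N θ : ℝ) : ℂ) + (N θ : ℂ) * (L * L * τ θ).trace := by
  have hS : IsSLD ((N θ : ℂ) • τ θ) ((dN : ℂ) • τ θ + (N θ : ℂ) • dτ) S := hSeq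
  have hL : IsSLD (τ θ) dτ L := hLeq
  have hN : (N θ : ℂ) ≠ 0 := by exact_mod_cast (hNpos θ).ne'
  have htr_dτ : dτ.trace = 0 :=
    (hasDerivAt_trace hdτ).unique (by simpa only [hτtr] using hasDerivAt_const θ (1 : ℂ))
  have htr_Sτ : (S * τ θ).trace = dN / N θ := by
    refine eq_div_of_mul_eq hN ?_
    simpa [htr_dτ, hτtr θ, mul_comm] using hS.trace_eq.symm
  have htr_Sdτ : (S * dτ).trace = (L * L * τ θ).trace := by
    have h := hS.trace_mul_comm (hL.smul (N θ))
    simp only [Matrix.mul_add, Matrix.mul_smul, trace_add, trace_smul, smul_eq_mul,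
      ← hL.trace_eq, htr_dτ, hL.trace_mul_self, mul_zero, zero_add] at h
    exact mul_left_cancel₀ hN h
  calc (S * S * ((N θ : ℂ) • τ θ)).trace
      = dN * (S * τ θ).trace + N θ * (S * dτ).trace := by
        rw [← hS.trace_mul_self, Matrix.mul_add, trace_add, Matrix.mul_smul, Matrix.mul_smul,
          trace_smul, trace_smul, smul_eq_mul, smul_eq_mul]
    _ = ((dN ^ 2 / N θ : ℝ) : ℂ) + N θ * (L * L * τ θ).trace := by
        rw [htr_Sdτ, htr_Sτ]
        push_cast
        ring

/-- Decomposition of the Helstrom (SLD quantum Fisher) information of an unnormalized state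
`Γ(θ) = N(θ) τ(θ)`: `tr(S²Γ) = N'(θ)²/N(θ) + N(θ) tr(L²τ)`, where `S` and `L` are the
symmetric logarithmic derivatives of `Γ` and `τ` at `θ`, respectively. -/
theorem helstrom_decomp {n : Type*} [Fintype n] [DecidableEq n]
    (τ : ℝ → Matrix n n ℂ) (N : ℝ → ℝ) (θ : ℝ)
    (hτpos : ∀ t, (τ t).PosDef) (hτtr : ∀ t, (τ t).trace = 1) (hNpos : ∀ t, 0 < N t)
    (dτ : Matrix n n ℂ) (dN : ℝ)
    (hdτ : ∀ i j, HasDerivAt (fun t => τ t i j) (dτ i j) θ)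
    (hdN : HasDerivAt N dN θ)
    (S L : Matrix n n ℂ) (hS : S.IsHermitian) (hL : L.IsHermitian)
    (hSeq : (dN : ℂ) • τ θ + (N θ : ℂ) • dτ
      = (2 : ℂ)⁻¹ • (S * ((N θ : ℂ) • τ θ) + ((N θ : ℂ) • τ θ) * S))
    (hLeq : dτ = (2 : ℂ)⁻¹ • (L * τ θ + τ θ * L)) :
    (S * S * ((N θ : ℂ) • τ θ)).trace
      = ((dN ^ 2 / N θ : ℝ) : ℂ) + (N θ : ℂ) * (L * L * τ θ).trace :=
  helstrom_decomp_general τ N θ hτtr hNpos dτ dN hdτ S L hSeq hLeq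
end
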